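/- arXiv:2106.01792 — 7 statements merged into one kernel-verified Lean document; each statement's English description precedes it below -/
import Mathlib

section
/- Let p ≥ 1 and l ≥ 1 be integers, let D be a finite set with |D| = l, and let q be an integer with 1 ≤ q ≤ l. For each j ∈ {1,…,p} let T_j be a nonempty compact subset of ℝ^{n_j}, equipped with Lebesgue measure λ_j, and for each d ∈ D let r_{d,j} : T_j → ℝ be a bounded measurable function. Set w_d := max_{1≤j≤p} sup_{t∈T_j} |r_{d,j}(t)|, let k be the q-th smallest value of the family (w_d)_{d∈D}, let H₂ := {d ∈ D : w_d ≤ k}, and define F_j(t) := max_{d∈H₂} |r_{d,j}(t)| for t ∈ T_j. Then Σ_{j=1}^p ∫_{T_j} F_j dλ_j ≤ k · Σ_{j=1}^p λ_j(T_j). Moreover, if for at least one j the function F_j is not λ_j-almost everywhere equal to a constant on T_j, then the inequality is strict: Σ_{j=1}^p ∫_{T_j} F_j dλ_j < k · Σ_{j=1}^p λ_j(T_j). -/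
open MeasureTheory

/-- The `q`-th smallest value (counted with multiplicity, `q` starting from 1) of a finite
family of real numbers: the `q`-th entry of the list of values sorted in nondecreasing order. -/
lemma sup'_pi_apply' {ι α β : Type*} [SemilatticeSup β] (s : Finset ι) (H : s.Nonempty)
    (f : ι → α → β) (a : α) : s.sup' H f a = s.sup' H (fun i => f i a) := by
  induction H using Finset.Nonempty.cons_induction with
  | singleton d => simp
  | cons d s hds hsne ih => simp [Finset.sup'_cons, ih]

noncomputable def qthSmallest {D : Type*} [Fintype D] (x : D → ℝ) (q : ℕ) : ℝ :=
  (Multiset.sort (Finset.univ.val.map x) (· ≤ ·)).getD (q - 1) 0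

theorem stmt0
    (p l : ℕ) (hp : 1 ≤ p) (hl : 1 ≤ l)
    (D : Type) [Fintype D] (hD : Fintype.card D = l)
    (q : ℕ) (hq1 : 1 ≤ q) (hq2 : q ≤ l)
    (n : Fin p → ℕ)
    (T : (j : Fin p) → Set (Fin (n j) → ℝ))
    (hTne : ∀ j, (T j).Nonempty) (hTcomp : ∀ j, IsCompact (T j))
    (r : D → (j : Fin p) → (Fin (n j) → ℝ) → ℝ)
    (hmeas : ∀ d j, Measurable (r d j))
    (hbdd : ∀ d j, BddAbove ((fun t => |r d j t|) '' T j))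
    (w : D → ℝ)
    (hw : ∀ d, w d = ⨆ j : Fin p, sSup ((fun t => |r d j t|) '' T j))
    (k : ℝ) (hk : k = qthSmallest w q)
    (F : (j : Fin p) → (Fin (n j) → ℝ) → ℝ)
    (hF : ∀ j t, F j t = sSup ((fun d : D => |r d j t|) '' {d : D | w d ≤ k})) :
    (∑ j : Fin p, ∫ t in T j, F j t) ≤ k * ∑ j : Fin p, (volume (T j)).toReal ∧
      ((∃ j : Fin p, ¬ ∃ c : ℝ, ∀ᵐ t ∂(volume.restrict (T j)), F j t = c) →
        (∑ j : Fin p, ∫ t in T j, F j t) < k * ∑ j : Fin p, (volume (T j)).toReal) := by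
  classical
  -- k is one of the values w d
  have hlen : (Multiset.sort (Finset.univ.val.map w) (· ≤ ·)).length = l := by
    rw [Multiset.length_sort, Multiset.card_map]
    simpa using hD
  have hq' : q - 1 < (Multiset.sort (Finset.univ.val.map w) (· ≤ ·)).length := by
    rw [hlen]; omega
  have hkmem : ∃ d0 : D, w d0 = k := by
    have : k ∈ Multiset.sort (Finset.univ.val.map w) (· ≤ ·) := by
      rw [hk, qthSmallest, List.getD_eq_getElem _ _ hq']
      exact List.getElem_mem _
    rw [Multiset.mem_sort, Multiset.mem_map] at this
    obtain ⟨d0, _, hd0⟩ := this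
    exact ⟨d0, hd0⟩
  obtain ⟨d0, hd0⟩ := hkmem
  -- the finset H₂
  set Hs : Finset D := Finset.univ.filter (fun d => w d ≤ k) with hHs
  have hd0H : d0 ∈ Hs := by simp [hHs, hd0.le]
  have hHne : Hs.Nonempty := ⟨d0, hd0H⟩
  -- F as a finite sup'
  have hF' : ∀ j t, F j t = Hs.sup' hHne (fun d => |r d j t|) := by
    intro j t
    rw [hF, Finset.sup'_eq_csSup_image]
    congr 1
    ext x
    simp [hHs]
  -- bound: |r d j t| ≤ w d on T j
  have hrw : ∀ d j, ∀ t ∈ T j, |r d j t| ≤ w d := by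
    intro d j t ht
    rw [hw]
    calc |r d j t| ≤ sSup ((fun t => |r d j t|) '' T j) :=
          le_csSup (hbdd d j) ⟨t, ht, rfl⟩
      _ ≤ ⨆ j : Fin p, sSup ((fun t => |r d j t|) '' T j) :=
          le_ciSup (f := fun j : Fin p => sSup ((fun t => |r d j t|) '' T j))
            (Set.Finite.bddAbove (Set.finite_range _)) j
  -- F ≤ k on T j
  have hFk : ∀ j, ∀ t ∈ T j, F j t ≤ k := by
    intro j t ht
    rw [hF' j t]
    apply Finset.sup'_le
    intro d hd
    exact (hrw d j t ht).trans (by simpa [hHs] using hd)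
  -- 0 ≤ F
  have hF0 : ∀ j t, 0 ≤ F j t := by
    intro j t
    rw [hF' j t]
    exact le_trans (abs_nonneg (r d0 j t)) (Finset.le_sup' (fun d => |r d j t|) hd0H)
  -- measurability
  have hFm : ∀ j, Measurable (F j) := by
    intro j
    have : F j = fun t => Hs.sup' hHne (fun d => |r d j t|) := funext (hF' j)
    rw [this]
    have hm := Finset.measurable_sup' (δ := (Fin (n j) → ℝ)) hHne (fun d _ => (hmeas d j).abs)
    have heq : (Hs.sup' hHne fun d t => |r d j t|) = fun t => Hs.sup' hHne fun d => |r d j t| :=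
      funext fun t => sup'_pi_apply' Hs hHne _ t
    rwa [heq] at hm
  have hTm : ∀ j, MeasurableSet (T j) := fun j => (hTcomp j).isClosed.measurableSet
  have hTfin : ∀ j, volume (T j) ≠ ⊤ := fun j => (hTcomp j).measure_lt_top.ne
  have hInt : ∀ j, IntegrableOn (F j) (T j) := by
    intro j
    refine Measure.integrableOn_of_bounded (hTfin j) (hFm j).aestronglyMeasurable
      (M := k) ?_
    refine (ae_restrict_iff' (hTm j)).2 (ae_of_all _ fun t ht => ?_)
    rw [Real.norm_eq_abs, abs_of_nonneg (hF0 j t)]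
    exact hFk j t ht
  have hIntc : ∀ j, IntegrableOn (fun _ => k) (T j) := fun j =>
    integrableOn_const (hTfin j)
  have key : ∀ j, ∫ t in T j, F j t ≤ k * (volume (T j)).toReal := by
    intro j
    calc ∫ t in T j, F j t ≤ ∫ _ in T j, k :=
          setIntegral_mono_on (hInt j) (hIntc j) (hTm j) (hFk j)
      _ = k * (volume (T j)).toReal := by rw [setIntegral_const, smul_eq_mul, mul_comm, Measure.real]
  constructor
  · rw [Finset.mul_sum]
    exact Finset.sum_le_sum fun j _ => key j
  · rintro ⟨j0, hj0⟩
    have hstrict : ∫ t in T j0, F j0 t < k * (volume (T j0)).toReal := by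
      have hne2 : ¬ (∀ᵐ t ∂volume.restrict (T j0), F j0 t = k) := fun h => hj0 ⟨k, h⟩
      have hgint : Integrable (fun t => k - F j0 t) (volume.restrict (T j0)) :=
        (hIntc j0).sub (hInt j0)
      have hgnn : 0 ≤ᵐ[volume.restrict (T j0)] fun t => k - F j0 t :=
        (ae_restrict_iff' (hTm j0)).2 (ae_of_all _ fun t ht => sub_nonneg.2 (hFk j0 t ht))
      have hpos : 0 < ∫ t in T j0, (k - F j0 t) := by
        rcases (integral_nonneg_of_ae hgnn).lt_or_eq with h | h
        · exact h
        · exfalso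
          have := (integral_eq_zero_iff_of_nonneg_ae hgnn hgint).1 h.symm
          exact hne2 (this.mono fun t ht => by
            have : k - F j0 t = 0 := ht
            linarith)
      have : ∫ t in T j0, (k - F j0 t) =
          k * (volume (T j0)).toReal - ∫ t in T j0, F j0 t := by
        rw [integral_sub (hIntc j0) (hInt j0), setIntegral_const, smul_eq_mul, mul_comm, Measure.real]
      linarith [this ▸ hpos]
    rw [Finset.mul_sum]
    exact Finset.sum_lt_sum (fun j _ => key j) ⟨j0, Finset.mem_univ _, hstrict⟩
end

section
/- Let p ≥ 1 and l ≥ 1 be integers, let D be a finite set with |D| = l, and let q be an integer with 1 ≤ q ≤ l. For each j ∈ {1,…,p} let T_j be a nonempty compact subset of ℝ^{n_j} with Lebesgue measure λ_j, and for each d ∈ D let r_{d,j} : T_j → ℝ be a continuous function. Set w_d := max_{1≤j≤p} max_{t∈T_j} |r_{d,j}(t)|, let k be the q-th smallest value of (w_d)_{d∈D}, let H₂ := {d ∈ D : w_d ≤ k}, and define F_j(t) := max_{d∈H₂} |r_{d,j}(t)|. Assume F_j(t) > 0 for every j and every t ∈ T_j, and that C := Σ_{j=1}^p ∫_{T_j}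 F_j dλ_j > 0. Define R̄_d := sup_{1≤j≤p} sup_{t∈T_j} |r_{d,j}(t)| · C / F_j(t). Then for every b ∈ D with b ∉ H₂ (equivalently, with w_b > k) one has R̄_b > C. -/
open MeasureTheory

theorem stmt3
    (p l : ℕ) (hp : 1 ≤ p) (hl : 1 ≤ l)
    (D : Type) [Fintype D] (hD : Fintype.card D = l)
    (q : ℕ) (hq1 : 1 ≤ q) (hq2 : q ≤ l)
    (n : Fin p → ℕ)
    (T : (j : Fin p) → Set (Fin (n j) → ℝ))
    (hTne : ∀ j, (T j).Nonempty) (hTcomp : ∀ j, IsCompact (T j))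
    (r : D → (j : Fin p) → (Fin (n j) → ℝ) → ℝ)
    (hcont : ∀ d j, ContinuousOn (r d j) (T j))
    (w : D → ℝ)
    (hw : ∀ d, w d = ⨆ j : Fin p, sSup ((fun t => |r d j t|) '' T j))
    (k : ℝ) (hk : k = qthSmallest w q)
    (F : (j : Fin p) → (Fin (n j) → ℝ) → ℝ)
    (hF : ∀ j t, F j t = sSup ((fun d : D => |r d j t|) '' {d : D | w d ≤ k}))
    (hFpos : ∀ j, ∀ t ∈ T j, 0 < F j t)
    (C : ℝ) (hC : C = ∑ j : Fin p, ∫ t in T j, F j t) (hCpos : 0 < C)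
    (Rbar : D → ℝ)
    (hRbar : ∀ d, Rbar d = ⨆ j : Fin p, sSup ((fun t => |r d j t| * C / F j t) '' T j)) :
    ∀ b : D, k < w b → C < Rbar b := by
  classical
  have hpne : Nonempty (Fin p) := ⟨⟨0, hp⟩⟩
  -- there is some d with w d = k
  have hkmem : ∃ d : D, w d = k := by
    have hlen : (Multiset.sort (Finset.univ.val.map w) (· ≤ ·)).length = l := by
      rw [Multiset.length_sort, Multiset.card_map]
      simpa using hD
    have hidx : q - 1 < (Multiset.sort (Finset.univ.val.map w) (· ≤ ·)).length := by
      rw [hlen]; omega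
    have hmem : k ∈ Multiset.sort (Finset.univ.val.map w) (· ≤ ·) := by
      rw [hk, qthSmallest, List.getD_eq_getElem _ _ hidx]
      exact List.getElem_mem hidx
    have : k ∈ Finset.univ.val.map w := by
      rwa [Multiset.mem_sort] at hmem
    obtain ⟨d, _, hd⟩ := Multiset.mem_map.mp this
    exact ⟨d, hd⟩
  obtain ⟨d0, hd0⟩ := hkmem
  have hH2ne : ({d : D | w d ≤ k} : Set D).Nonempty := ⟨d0, le_of_eq hd0⟩
  -- basic bound : |r d j t| ≤ w d
  have hbdd : ∀ (d : D) (j : Fin p), BddAbove ((fun t => |r d j t|) '' T j) :=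
    fun d j => ((hTcomp j).image_of_continuousOn (hcont d j).abs).bddAbove
  have hle : ∀ (d : D) (j : Fin p), ∀ t ∈ T j, |r d j t| ≤ w d := by
    intro d j t ht
    rw [hw]
    calc |r d j t| ≤ sSup ((fun t => |r d j t|) '' T j) :=
          le_csSup (hbdd d j) ⟨t, ht, rfl⟩
      _ ≤ ⨆ j : Fin p, sSup ((fun t => |r d j t|) '' T j) :=
          le_ciSup (f := fun j : Fin p => sSup ((fun t => |r d j t|) '' T j))
            (Set.finite_range _).bddAbove j
  -- the finset version of H₂
  set H : Finset D := Finset.univ.filter (fun d => w d ≤ k) with hHdef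
  have hHne : H.Nonempty := ⟨d0, by simp [hHdef, le_of_eq hd0]⟩
  have hHset : ∀ (j : Fin p) (t : Fin (n j) → ℝ),
      (fun d : D => |r d j t|) '' {d : D | w d ≤ k}
        = (fun d : D => |r d j t|) '' (H : Set D) := by
    intro j t
    congr 1
    ext x
    simp [hHdef]
  have hFeq : ∀ (j : Fin p) (t : Fin (n j) → ℝ),
      F j t = H.sup' hHne (fun d => |r d j t|) := by
    intro j t
    rw [hF, hHset, Finset.sup'_eq_csSup_image]
  -- continuity of F j on T j
  have hFcont : ∀ j : Fin p, ContinuousOn (F j) (T j) := by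
    intro j
    have h1 : ContinuousOn (fun t => H.sup' hHne (fun d => |r d j t|)) (T j) :=
      ContinuousOn.finset_sup'_apply hHne (fun d _ => (hcont d j).abs)
    exact h1.congr (fun t _ => hFeq j t)
  -- continuity of the modulated score function
  have hgcont : ∀ (d : D) (j : Fin p),
      ContinuousOn (fun t => |r d j t| * C / F j t) (T j) := by
    intro d j
    exact ((hcont d j).abs.mul continuousOn_const).div (hFcont j)
      (fun t ht => ne_of_gt (hFpos j t ht))
  have hgbdd : ∀ (d : D) (j : Fin p),
      BddAbove ((fun t => |r d j t| * C / F j t) '' T j) :=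
    fun d j => ((hTcomp j).image_of_continuousOn (hgcont d j)).bddAbove
  intro b hb
  -- find j* with k < sSup (...)
  rw [hw] at hb
  have hjstar : ∃ j : Fin p, k < sSup ((fun t => |r b j t|) '' T j) := by
    by_contra h
    push_neg at h
    exact absurd (ciSup_le h) (not_le.2 hb)
  obtain ⟨j, hj⟩ := hjstar
  -- find t* with k < |r b j t*|
  have htstar : ∃ t ∈ T j, k < |r b j t| := by
    by_contra h
    push_neg at h
    have : sSup ((fun t => |r b j t|) '' T j) ≤ k := by
      apply csSup_le ((hTne j).image _)
      rintro x ⟨t, ht, rfl⟩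
      exact h t ht
    exact absurd this (not_le.2 hj)
  obtain ⟨t, ht, hrt⟩ := htstar
  -- F j t ≤ k
  have hFk : F j t ≤ k := by
    rw [hF]
    apply csSup_le (hH2ne.image _)
    rintro x ⟨d, hd, rfl⟩
    exact le_trans (hle d j t ht) hd
  -- the modulated score at (j, t) exceeds C
  have hvC : C < |r b j t| * C / F j t := by
    rw [lt_div_iff₀ (hFpos j t ht)]
    nlinarith [hFpos j t ht, lt_of_le_of_lt hFk hrt]
  rw [hRbar]
  calc C < |r b j t| * C / F j t := hvC
    _ ≤ sSup ((fun t => |r b j t| * C / F j t) '' T j) :=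
        le_csSup (hgbdd b j) ⟨t, ht, rfl⟩
    _ ≤ ⨆ j : Fin p, sSup ((fun t => |r b j t| * C / F j t) '' T j) :=
        le_ciSup (f := fun j : Fin p => sSup ((fun t => |r b j t| * C / F j t) '' T j))
          (Set.finite_range _).bddAbove j
end

section
/- Let p ≥ 1 and l ≥ 1 be integers, let D be a finite set with |D| = l, and let q be an integer with 1 ≤ q ≤ l. For each j ∈ {1,…,p} let T_j be a nonempty compact subset of ℝ^{n_j} with Lebesgue measure λ_j, and for each d ∈ D let r_{d,j} : T_j → ℝ be a continuous function. Set w_d := max_{1≤j≤p} max_{t∈T_j} |r_{d,j}(t)|, let k be the q-th smallest value of (w_d)_{d∈D}, let H₂ := {d ∈ D : w_d ≤ k}, and define F_j(t) := max_{d∈H₂} |r_{d,j}(t)|. Assume F_j(t) > 0 for every j and every t ∈ T_j, and that C := Σ_{j=1}^p ∫_{T_j} F_j dλ_j > 0. Define R̄_d := sup_{1≤j≤p} sup_{t∈T_j} |r_{d,j}(t)| · C / F_j(t). Then {d ∈ D : R̄_d ≤ C} = H₂; consequently, if |H₂| = q, then the q-th smallest value of the family (R̄_d)_{d∈D} equals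 C. -/
open MeasureTheory

lemma aux_countA {L : List ℝ} (hL : L.Pairwise (· ≤ ·)) {i : ℕ} (hi : i < L.length) {c : ℝ}
    (h : L.get ⟨i, hi⟩ < c) : i + 1 ≤ L.countP (fun a => decide (a < c)) := by
  have hsplit := List.take_append_drop (i+1) L
  have hlen : (L.take (i+1)).length = i + 1 := by
    rw [List.length_take]; omega
  have hall : ∀ a ∈ L.take (i+1), (fun a => decide (a < c)) a = true := by
    intro a ha
    rw [List.mem_take_iff_getElem] at ha
    obtain ⟨j, hj, rfl⟩ := ha
    simp only [decide_eq_true_iff]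
    have hj' : j < L.length := by omega
    have : L.get ⟨j, hj'⟩ ≤ L.get ⟨i, hi⟩ := hL.rel_get_of_le (by simp; omega)
    calc L[j] = L.get ⟨j, hj'⟩ := rfl
      _ ≤ L.get ⟨i, hi⟩ := this
      _ < c := h
  calc i + 1 = (L.take (i+1)).countP (fun a => decide (a < c)) := by
        rw [List.countP_eq_length.mpr hall, hlen]
    _ ≤ L.countP _ := by
        conv_rhs => rw [← hsplit]
        rw [List.countP_append]; omega

lemma aux_countB {L : List ℝ} (hL : L.Pairwise (· ≤ ·)) {i : ℕ} (hi : i < L.length) {c : ℝ}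
    (h : c < L.get ⟨i, hi⟩) : L.countP (fun a => decide (a ≤ c)) ≤ i := by
  have hsplit := List.take_append_drop i L
  have hzero : (L.drop i).countP (fun a => decide (a ≤ c)) = 0 := by
    rw [List.countP_eq_zero]
    intro a ha
    rw [List.mem_iff_getElem] at ha
    obtain ⟨j, hj, rfl⟩ := ha
    simp only [decide_eq_true_iff, not_le]
    rw [List.getElem_drop]
    have hij : i + j < L.length := by
      rw [List.length_drop] at hj; omega
    have : L.get ⟨i, hi⟩ ≤ L.get ⟨i + j, hij⟩ := hL.rel_get_of_le (by simp)
    calc c < L.get ⟨i, hi⟩ := h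
      _ ≤ L[i+j] := this
  calc L.countP (fun a => decide (a ≤ c))
      = (L.take i).countP _ + (L.drop i).countP _ := by
        conv_lhs => rw [← hsplit]
        rw [List.countP_append]
    _ ≤ (L.take i).length + 0 := by rw [hzero]; exact Nat.add_le_add_right List.countP_le_length 0
    _ ≤ i := by rw [List.length_take]; omega

open Classical in
lemma aux_ncard_countP {D : Type} [Fintype D] (x : D → ℝ) (P : ℝ → Prop) [DecidablePred P] :
    {d | P (x d)}.ncard = (Multiset.sort (Finset.univ.val.map x) (· ≤ ·)).countP (fun a => decide (P a)) := by
  rw [Set.ncard_eq_toFinset_card', Set.toFinset_setOf]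
  have h1 : (Finset.univ.filter (fun d => P (x d))).card
      = Multiset.countP (fun d => P (x d)) Finset.univ.val := by
    rw [Multiset.countP_eq_card_filter]; rfl
  have h2 : Multiset.countP P (Finset.univ.val.map x)
      = Multiset.countP (fun d => P (x d)) Finset.univ.val := by
    rw [Multiset.countP_map, Multiset.countP_eq_card_filter]
  have h3 : Multiset.countP P (Finset.univ.val.map x)
      = (Multiset.sort (Finset.univ.val.map x) (· ≤ ·)).countP (fun a => decide (P a)) := by
    conv_lhs => rw [← Multiset.sort_eq (Finset.univ.val.map x) (· ≤ ·)]
    rw [Multiset.coe_countP]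
  rw [h1, ← h2, h3]

lemma aux_len {D : Type} [Fintype D] (x : D → ℝ) :
    (Multiset.sort (Finset.univ.val.map x) (· ≤ ·)).length = Fintype.card D := by
  rw [Multiset.length_sort, Multiset.card_map]; rfl

lemma aux_exists {D : Type} [Fintype D] (x : D → ℝ) (q : ℕ) (hq1 : 1 ≤ q)
    (hq2 : q ≤ Fintype.card D) : ∃ d, x d = qthSmallest x q := by
  set L := Multiset.sort (Finset.univ.val.map x) (· ≤ ·) with hL
  have hlen : L.length = Fintype.card D := aux_len x
  have hi : q - 1 < L.length := by omega
  have hval : qthSmallest x q = L.get ⟨q-1, hi⟩ := by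
    rw [qthSmallest, List.getD_eq_getElem _ _ hi]; rfl
  have hmem : L.get ⟨q-1, hi⟩ ∈ L := List.get_mem _ _
  have : L.get ⟨q-1, hi⟩ ∈ Finset.univ.val.map x := by
    rw [← Multiset.sort_eq (Finset.univ.val.map x) (· ≤ ·)]
    exact_mod_cast hmem
  obtain ⟨d, _, hd⟩ := Multiset.mem_map.mp this
  exact ⟨d, by rw [hd, hval]⟩

open Classical in
lemma aux_qth_eq {D : Type} [Fintype D] (x : D → ℝ) (q : ℕ) (c : ℝ)
    (hq1 : 1 ≤ q) (hq2 : q ≤ Fintype.card D)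
    (hle : q ≤ {d | x d ≤ c}.ncard)
    (hlt : {d | x d < c}.ncard < q) :
    qthSmallest x q = c := by
  set L := Multiset.sort (Finset.univ.val.map x) (· ≤ ·) with hLdef
  have hsorted : L.Pairwise (· ≤ ·) := Multiset.pairwise_sort _ _
  have hlen : L.length = Fintype.card D := aux_len x
  have hi : q - 1 < L.length := by omega
  have hval : qthSmallest x q = L.get ⟨q-1, hi⟩ := by
    rw [qthSmallest, List.getD_eq_getElem _ _ hi]; rfl
  have hcle : {d | x d ≤ c}.ncard = L.countP (fun a => decide (a ≤ c)) :=
    aux_ncard_countP x (· ≤ c)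
  have hclt : {d | x d < c}.ncard = L.countP (fun a => decide (a < c)) :=
    aux_ncard_countP x (· < c)
  rcases lt_trichotomy (L.get ⟨q-1, hi⟩) c with h | h | h
  · have := aux_countA hsorted hi h
    omega
  · rw [hval, h]
  · have := aux_countB hsorted hi h
    omega

theorem stmt4
    (p l : ℕ) (hp : 1 ≤ p) (hl : 1 ≤ l)
    (D : Type) [Fintype D] (hD : Fintype.card D = l)
    (q : ℕ) (hq1 : 1 ≤ q) (hq2 : q ≤ l)
    (n : Fin p → ℕ)
    (T : (j : Fin p) → Set (Fin (n j) → ℝ))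
    (hTne : ∀ j, (T j).Nonempty) (hTcomp : ∀ j, IsCompact (T j))
    (r : D → (j : Fin p) → (Fin (n j) → ℝ) → ℝ)
    (hcont : ∀ d j, ContinuousOn (r d j) (T j))
    (w : D → ℝ)
    (hw : ∀ d, w d = ⨆ j : Fin p, sSup ((fun t => |r d j t|) '' T j))
    (k : ℝ) (hk : k = qthSmallest w q)
    (F : (j : Fin p) → (Fin (n j) → ℝ) → ℝ)
    (hF : ∀ j t, F j t = sSup ((fun d : D => |r d j t|) '' {d : D | w d ≤ k}))
    (hFpos : ∀ j, ∀ t ∈ T j, 0 < F j t)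
    (C : ℝ) (hC : C = ∑ j : Fin p, ∫ t in T j, F j t) (hCpos : 0 < C)
    (Rbar : D → ℝ)
    (hRbar : ∀ d, Rbar d = ⨆ j : Fin p, sSup ((fun t => |r d j t| * C / F j t) '' T j)) :
    {d : D | Rbar d ≤ C} = {d : D | w d ≤ k} ∧
      (({d : D | w d ≤ k} : Set D).ncard = q → qthSmallest Rbar q = C) := by
  haveI : Nonempty (Fin p) := ⟨⟨0, hp⟩⟩
  have hcard : q ≤ Fintype.card D := by omega
  have habs : ∀ d j, ContinuousOn (fun t => |r d j t|) (T j) := fun d j => (hcont d j).abs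
  have hbdd : ∀ d j, BddAbove ((fun t => |r d j t|) '' T j) :=
    fun d j => ((hTcomp j).image_of_continuousOn (habs d j)).bddAbove
  -- Fact 1
  have fact1 : ∀ d j, ∀ t ∈ T j, |r d j t| ≤ w d := by
    intro d j t ht
    rw [hw]
    exact le_trans (le_csSup (hbdd d j) ⟨t, ht, rfl⟩)
      (le_ciSup (f := fun j : Fin p => sSup ((fun t => |r d j t|) '' T j))
        (Set.Finite.bddAbove (Set.finite_range _)) j)
  -- H₂ nonempty
  obtain ⟨d₀, hd₀⟩ := aux_exists w q hq1 hcard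
  have hH2ne : ({d : D | w d ≤ k} : Set D).Nonempty := ⟨d₀, le_of_eq (hd₀.trans hk.symm)⟩
  have hH2fin : ({d : D | w d ≤ k} : Set D).Finite := Set.toFinite _
  -- Fact 2
  have fact2 : ∀ j t, ∀ d, w d ≤ k → |r d j t| ≤ F j t := by
    intro j t d hd
    rw [hF]
    exact le_csSup (Set.Finite.bddAbove (hH2fin.image _)) ⟨d, hd, rfl⟩
  -- Fact 3
  have fact3 : ∀ j, ∀ t ∈ T j, F j t ≤ k := by
    intro j t ht
    rw [hF]
    apply csSup_le (hH2ne.image _)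
    rintro _ ⟨d', hd', rfl⟩
    exact le_trans (fact1 d' j t ht) hd'
  -- Fact 4 : sup attained
  have fact4 : ∀ j t, ∃ d, w d ≤ k ∧ |r d j t| = F j t := by
    intro j t
    have := Set.Nonempty.csSup_mem (hH2ne.image (fun d : D => |r d j t|)) (hH2fin.image _)
    rw [← hF j t] at this
    obtain ⟨d, hd, hdeq⟩ := this
    exact ⟨d, hd, hdeq⟩
  -- continuity of F
  set S : Finset D := hH2fin.toFinset with hS
  have hSne : S.Nonempty := hH2fin.toFinset_nonempty.mpr hH2ne
  have hFeq : ∀ j t, F j t = S.sup' hSne (fun d => |r d j t|) := by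
    intro j t
    rw [hF, Finset.sup'_eq_csSup_image]
    congr 1
    rw [hS, Set.Finite.coe_toFinset]
  have hFcont : ∀ j, ContinuousOn (F j) (T j) := by
    intro j
    have : ContinuousOn (fun t => S.sup' hSne (fun d => |r d j t|)) (T j) :=
      ContinuousOn.finset_sup'_apply hSne (fun d _ => habs d j)
    exact this.congr (fun t _ => hFeq j t)
  have hvcont : ∀ d j, ContinuousOn (fun t => |r d j t| * C / F j t) (T j) := by
    intro d j
    exact ((habs d j).mul continuousOn_const).div (hFcont j) (fun t ht => (hFpos j t ht).ne')
  have hvbdd : ∀ d j, BddAbove ((fun t => |r d j t| * C / F j t) '' T j) :=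
    fun d j => ((hTcomp j).image_of_continuousOn (hvcont d j)).bddAbove
  -- set equality
  have hset : {d : D | Rbar d ≤ C} = {d : D | w d ≤ k} := by
    ext d
    simp only [Set.mem_setOf_eq]
    constructor
    · intro hR
      rw [hw]
      apply ciSup_le
      intro j
      apply csSup_le ((hTne j).image _)
      rintro _ ⟨t, ht, rfl⟩
      have hv : |r d j t| * C / F j t ≤ C := by
        refine le_trans (le_trans (le_csSup (hvbdd d j) ⟨t, ht, rfl⟩)
          (le_ciSup (f := fun j : Fin p => sSup ((fun t => |r d j t| * C / F j t) '' T j))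
            (Set.Finite.bddAbove (Set.finite_range _)) j)) ?_
        rw [← hRbar]; exact hR
      have hrF : |r d j t| ≤ F j t := by
        rw [div_le_iff₀ (hFpos j t ht)] at hv
        have h2 : |r d j t| * C ≤ F j t * C := by linarith
        exact le_of_mul_le_mul_right h2 hCpos
      exact le_trans hrF (fact3 j t ht)
    · intro hd
      rw [hRbar]
      apply ciSup_le
      intro j
      apply csSup_le ((hTne j).image _)
      rintro _ ⟨t, ht, rfl⟩
      rw [div_le_iff₀ (hFpos j t ht)]
      calc |r d j t| * C ≤ F j t * C := by
            exact mul_le_mul_of_nonneg_right (fact2 j t d hd) hCpos.le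
        _ = C * F j t := mul_comm _ _
  refine ⟨hset, fun hqcard => ?_⟩
  -- witness with Rbar = C
  obtain ⟨t₀, ht₀⟩ := hTne ⟨0, hp⟩
  obtain ⟨d₁, hd₁mem, hd₁eq⟩ := fact4 ⟨0, hp⟩ t₀
  have hd₁le : Rbar d₁ ≤ C := by
    have h1 : d₁ ∈ {d : D | w d ≤ k} := hd₁mem
    rw [← hset] at h1
    exact h1
  have hd₁ge : C ≤ Rbar d₁ := by
    have hval : |r d₁ ⟨0, hp⟩ t₀| * C / F ⟨0, hp⟩ t₀ = C := by
      rw [hd₁eq, mul_comm, mul_div_assoc, div_self (hFpos ⟨0, hp⟩ t₀ ht₀).ne', mul_one]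
    rw [hRbar]
    calc C = |r d₁ ⟨0, hp⟩ t₀| * C / F ⟨0, hp⟩ t₀ := hval.symm
      _ ≤ sSup ((fun t => |r d₁ ⟨0, hp⟩ t| * C / F ⟨0, hp⟩ t) '' T ⟨0, hp⟩) :=
          le_csSup (hvbdd d₁ ⟨0, hp⟩) ⟨t₀, ht₀, rfl⟩
      _ ≤ _ := le_ciSup (f := fun j : Fin p => sSup ((fun t => |r d₁ j t| * C / F j t) '' T j))
          (Set.Finite.bddAbove (Set.finite_range _)) _
  have hd₁C : Rbar d₁ = C := le_antisymm hd₁le hd₁ge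
  apply aux_qth_eq Rbar q C hq1 hcard
  · rw [hset, hqcard]
  · have hssub : {d : D | Rbar d < C} ⊂ {d : D | w d ≤ k} := by
      constructor
      · intro d hd
        rw [← hset]
        have h3 : Rbar d < C := hd
        exact h3.le
      · intro hsub
        have h4 : Rbar d₁ < C := hsub hd₁mem
        rw [hd₁C] at h4
        exact lt_irrefl _ h4
    calc ({d : D | Rbar d < C}).ncard < ({d : D | w d ≤ k}).ncard :=
          Set.ncard_lt_ncard hssub (Set.toFinite _)
      _ = q := hqcard
end

section
/- Let l ≥ 1 be an integer, D a finite set with |D| = l, (R_d)_{d∈D} a family of real numbers, R ∈ ℝ, and α ∈ [1/(l+1), 1). Define δ := (1 + |{d ∈ D : R_d ≥ R}|)/(l+1), and let k be the ⌈(l+1)(1−α)⌉-th smallest value of the family (R_d)_{d∈D}. Then δ > α if and only if R ≤ k. -/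
lemma sorted_count_ge (L : List ℝ) (hs : L.Pairwise (· ≤ ·)) (i : ℕ) (hi : i < L.length) (R : ℝ) :
    R ≤ L[i] ↔ L.length - i ≤ L.countP (fun x => decide (R ≤ x)) := by
  constructor
  · intro h
    have hc : (L.take i).countP (fun x => decide (R ≤ x))
        + (L.drop i).countP (fun x => decide (R ≤ x)) = L.countP (fun x => decide (R ≤ x)) := by
      rw [← List.countP_append, List.take_append_drop]
    have hall : ∀ x ∈ L.drop i, R ≤ x := by
      intro x hx
      obtain ⟨j, hj, rfl⟩ := List.mem_iff_getElem.mp hx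
      rw [List.getElem_drop]
      refine h.trans ?_
      exact hs.rel_get_of_le (a := ⟨i, hi⟩) (b := ⟨i + j, by
        have := hj; rw [List.length_drop] at this; omega⟩) (Fin.mk_le_mk.mpr (by omega))
    have hlen : (L.drop i).countP (fun x => decide (R ≤ x)) = (L.drop i).length :=
      List.countP_eq_length.mpr (fun a ha => by simpa using hall a ha)
    rw [hlen, List.length_drop] at hc
    omega
  · intro h
    by_contra hlt
    push_neg at hlt
    have hall : ∀ x ∈ L.take (i+1), ¬ (R ≤ x) := by
      intro x hx
      obtain ⟨j, hj, rfl⟩ := List.mem_iff_getElem.mp hx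
      rw [List.getElem_take]
      have hj' : j ≤ i := by rw [List.length_take] at hj; omega
      have := hs.rel_get_of_le (a := ⟨j, by omega⟩) (b := ⟨i, hi⟩) (Fin.mk_le_mk.mpr hj')
      intro hR
      exact absurd (hR.trans this) (not_le.mpr hlt)
    have hz : (L.take (i+1)).countP (fun x => decide (R ≤ x)) = 0 :=
      List.countP_eq_zero.mpr (fun a ha => by simpa using hall a ha)
    have hc : (L.take (i+1)).countP (fun x => decide (R ≤ x))
        + (L.drop (i+1)).countP (fun x => decide (R ≤ x)) = L.countP (fun x => decide (R ≤ x)) := by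
      rw [← List.countP_append, List.take_append_drop]
    have hle := List.countP_le_length (l := L.drop (i+1)) (p := fun x => decide (R ≤ x))
    rw [List.length_drop] at hle
    omega

theorem stmt6 (l : ℕ) (hl : 1 ≤ l) (D : Type) [Fintype D] (hD : Fintype.card D = l)
    (Rd : D → ℝ) (R : ℝ) (α : ℝ)
    (hα1 : 1 / ((l : ℝ) + 1) ≤ α) (hα2 : α < 1)
    (δ : ℝ)
    (hδ : δ = (1 + (({d : D | R ≤ Rd d} : Set D).ncard : ℝ)) / ((l : ℝ) + 1))
    (k : ℝ) (hk : k = qthSmallest Rd ⌈((l : ℝ) + 1) * (1 - α)⌉₊) :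
    δ > α ↔ R ≤ k := by
  classical
  have hl1 : (0:ℝ) < (l:ℝ) + 1 := by positivity
  set q : ℕ := ⌈((l : ℝ) + 1) * (1 - α)⌉₊ with hqdef
  set L : List ℝ := Multiset.sort (Finset.univ.val.map Rd) (· ≤ ·) with hL
  have hlen : L.length = l := by
    rw [hL, Multiset.length_sort, Multiset.card_map, ← hD]
    rfl
  -- bounds on q
  have hpos : (0:ℝ) < ((l : ℝ) + 1) * (1 - α) := by
    have : 0 < 1 - α := by linarith
    positivity
  have hq1 : 1 ≤ q := Nat.one_le_iff_ne_zero.mpr (by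
    intro h0
    have := Nat.ceil_eq_zero.mp h0
    linarith)
  have hq2 : q ≤ l := by
    apply Nat.ceil_le.mpr
    have : ((l : ℝ) + 1) * (1 / ((l:ℝ)+1)) ≤ ((l:ℝ)+1) * α :=
      mul_le_mul_of_nonneg_left hα1 (le_of_lt hl1)
    rw [mul_one_div, div_self (ne_of_gt hl1)] at this
    nlinarith
  have hqceil : ((l : ℝ) + 1) * (1 - α) ≤ (q : ℝ) := Nat.le_ceil _
  have hqlt : (q : ℝ) < ((l : ℝ) + 1) * (1 - α) + 1 := Nat.ceil_lt_add_one (le_of_lt hpos)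
  -- the count
  set c : ℕ := ({d : D | R ≤ Rd d} : Set D).ncard with hcdef
  have hc : c = L.countP (fun x => decide (R ≤ x)) := by
    rw [hcdef, hL, ← Multiset.coe_countP, Multiset.sort_eq,
      Set.ncard_eq_toFinset_card', Set.toFinset_setOf, Multiset.countP_map,
      Finset.card_def, Finset.filter_val]
  -- k is L[q-1]
  have hq1l : q - 1 < L.length := by omega
  have hkk : k = L[q-1] := by
    rw [hk, qthSmallest, ← hL, List.getD_eq_getElem L 0 hq1l]
  -- right side
  have hright : R ≤ k ↔ l + 1 - q ≤ c := by
    rw [hkk, sorted_count_ge L (Multiset.pairwise_sort _ _) (q-1) hq1l R, ← hc, hlen]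
    constructor <;> intro <;> omega
  -- left side
  have hleft : δ > α ↔ l + 1 - q ≤ c := by
    rw [hδ, gt_iff_lt, lt_div_iff₀ hl1]
    constructor
    · intro h
      have hcast : ((l:ℝ)) - q < (c:ℝ) := by nlinarith
      have : ((l - q : ℕ) : ℝ) < (c:ℝ) := by
        rw [Nat.cast_sub hq2]; exact hcast
      have := Nat.cast_lt.mp this
      omega
    · intro h
      have : ((l + 1 - q : ℕ) : ℝ) ≤ (c:ℝ) := Nat.cast_le.mpr h
      rw [Nat.cast_sub (by omega)] at this
      push_cast at this
      nlinarith
  rw [hleft, hright]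
end

section
/- Let l ≥ 1 be an integer, D a finite set with |D| = l, (R_d)_{d∈D} a family of real numbers, R ∈ ℝ, τ ∈ [0,1], and α ∈ [τ/(l+1), (l+τ)/(l+1)). Define δ_τ := (|{d ∈ D : R_d > R}| + τ·(1 + |{d ∈ D : R_d = R}|))/(l+1). Let q := ⌈l + τ − (l+1)α⌉ (so that 1 ≤ q ≤ l), let w be the q-th smallest value of (R_d)_{d∈D}, and set r := |{d ∈ D : R_d ≤ w}| − q and v := (q−1) − |{d ∈ D : R_d < w}|. If τ > ((l+1)α − ⌊(l+1)α − τ⌋ + r)/(r + v + 2), then δ_τ > α if and only if R ≤ w. -/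
theorem mylem (s : List ℝ) (hs : s.Pairwise (· ≤ ·)) (q : ℕ) (h1 : 1 ≤ q) (h2 : q ≤ s.length)
    (w : ℝ) (hw : w = s.getD (q-1) 0) :
    q ≤ s.countP (fun x => decide (x ≤ w)) ∧ s.countP (fun x => decide (x < w)) ≤ q - 1 := by
  have hidx : q - 1 < s.length := lt_of_lt_of_le (Nat.sub_lt h1 one_pos) h2
  have hw' : w = s[q-1] := by rw [hw]; exact List.getD_eq_getElem s 0 hidx
  have hmono : ∀ i j (hi : i < s.length) (hj : j < s.length), i ≤ j → s[i] ≤ s[j] := by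
    intro i j hi hj hij
    have := hs.rel_get_of_le (a := ⟨i, hi⟩) (b := ⟨j, hj⟩) hij
    simpa [List.get_eq_getElem] using this
  constructor
  · have hsplit : s.countP (fun x => decide (x ≤ w)) =
        (s.take q).countP (fun x => decide (x ≤ w)) +
        (s.drop q).countP (fun x => decide (x ≤ w)) := by
      conv_lhs => rw [← List.take_append_drop q s]
      rw [List.countP_append]
    have htake : (s.take q).countP (fun x => decide (x ≤ w)) = q := by
      rw [List.countP_eq_length.mpr, List.length_take, min_eq_left h2]
      intro a ha
      obtain ⟨i, hi, hia⟩ := List.getElem_of_mem ha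
      have hi' : i < q := by simpa [List.length_take, min_eq_left h2] using hi
      rw [List.getElem_take] at hia
      subst hia
      simp only [decide_eq_true_eq, hw']
      exact hmono i (q-1) (by omega) hidx (by omega)
    omega
  · have hsplit : s.countP (fun x => decide (x < w)) =
        (s.take (q-1)).countP (fun x => decide (x < w)) +
        (s.drop (q-1)).countP (fun x => decide (x < w)) := by
      conv_lhs => rw [← List.take_append_drop (q-1) s]
      rw [List.countP_append]
    have hdrop : (s.drop (q-1)).countP (fun x => decide (x < w)) = 0 := by
      rw [List.countP_eq_zero]
      intro a ha
      obtain ⟨i, hi, hia⟩ := List.getElem_of_mem ha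
      rw [List.getElem_drop] at hia
      subst hia
      simp only [decide_eq_true_eq, not_lt, hw']
      exact hmono (q-1) (q-1+i) hidx (by simp [List.length_drop] at hi; omega) (by omega)
    have htake := List.countP_le_length (l := s.take (q-1)) (p := fun x => decide (x < w))
    rw [List.length_take] at htake
    omega

theorem mycount (D : Type) [Fintype D] (Rd : D → ℝ) (p : ℝ → Prop) [DecidablePred p]
    (s : List ℝ) (hs : s = Multiset.sort (Finset.univ.val.map Rd) (· ≤ ·)) :
    (Finset.univ.filter (fun d => p (Rd d))).card = s.countP (fun x => decide (p x)) := by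
  have h2 : (Finset.univ.val.map Rd : Multiset ℝ) = ↑s := by rw [hs, Multiset.sort_eq]
  calc (Finset.univ.filter (fun d => p (Rd d))).card
      = Multiset.countP (fun d => p (Rd d)) Finset.univ.val := by
        rw [Finset.card, Finset.filter_val, ← Multiset.countP_eq_card_filter]
    _ = Multiset.countP (fun x => p x) (Finset.univ.val.map Rd) := by
        rw [Multiset.countP_map]; exact Multiset.countP_eq_card_filter _ _
    _ = s.countP (fun x => decide (p x)) := by rw [h2]; simp [Multiset.coe_countP]

theorem stmt8 (l : ℕ) (hl : 1 ≤ l) (D : Type) [Fintype D] (hD : Fintype.card D = l)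
    (Rd : D → ℝ) (R : ℝ) (τ : ℝ) (hτ0 : 0 ≤ τ) (hτ1 : τ ≤ 1)
    (α : ℝ) (hα1 : τ / ((l : ℝ) + 1) ≤ α) (hα2 : α < ((l : ℝ) + τ) / ((l : ℝ) + 1))
    (δ : ℝ)
    (hδ : δ = ((({d : D | R < Rd d} : Set D).ncard : ℝ) +
        τ * (1 + (({d : D | Rd d = R} : Set D).ncard : ℝ))) / ((l : ℝ) + 1))
    (q : ℕ) (hq : q = ⌈(l : ℝ) + τ - ((l : ℝ) + 1) * α⌉₊)
    (w : ℝ) (hw : w = qthSmallest Rd q)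
    (rr vv : ℝ)
    (hr : rr = (({d : D | Rd d ≤ w} : Set D).ncard : ℝ) - (q : ℝ))
    (hv : vv = ((q : ℝ) - 1) - (({d : D | Rd d < w} : Set D).ncard : ℝ))
    (hcase : τ > (((l : ℝ) + 1) * α - (⌊((l : ℝ) + 1) * α - τ⌋ : ℝ) + rr) / (rr + vv + 2)) :
    δ > α ↔ R ≤ w := by
  classical
  have hl1 : (0:ℝ) < (l : ℝ) + 1 := by positivity
  have hα2' : ((l : ℝ) + 1) * α < (l : ℝ) + τ := by
    have := (lt_div_iff₀ hl1).mp hα2; linarith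
  have hα1' : τ ≤ ((l : ℝ) + 1) * α := by
    have := (div_le_iff₀ hl1).mp hα1; linarith
  have hxpos : (0:ℝ) < (l : ℝ) + τ - ((l : ℝ) + 1) * α := by linarith
  have hq1 : 1 ≤ q := by rw [hq]; exact Nat.one_le_ceil_iff.mpr hxpos
  have hql : q ≤ l := by rw [hq]; exact Nat.ceil_le.mpr (by linarith)
  have hqle : (l : ℝ) + τ - ((l : ℝ) + 1) * α ≤ (q : ℝ) := by rw [hq]; exact Nat.le_ceil _
  have hqlt : (q : ℝ) < (l : ℝ) + τ - ((l : ℝ) + 1) * α + 1 := by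
    rw [hq]; exact Nat.ceil_lt_add_one hxpos.le
  have hfloor : ((⌊((l : ℝ) + 1) * α - τ⌋ : ℤ) : ℝ) = (l : ℝ) - (q : ℝ) := by
    have h : ⌊((l : ℝ) + 1) * α - τ⌋ = (l : ℤ) - (q : ℤ) := by
      rw [Int.floor_eq_iff]
      constructor <;> push_cast <;> linarith
    rw [h]; push_cast; ring
  -- the sorted list
  set s : List ℝ := Multiset.sort (Finset.univ.val.map Rd) (· ≤ ·) with hs
  have hslen : s.length = l := by
    rw [hs, Multiset.length_sort, Multiset.card_map, ← Finset.card_def, Finset.card_univ, hD]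
  have hsort : s.Pairwise (· ≤ ·) := Multiset.pairwise_sort _ _
  have hw' : w = s.getD (q-1) 0 := by rw [hw, qthSmallest, hs]
  obtain ⟨hcle, hclt⟩ := mylem s hsort q hq1 (by omega) w hw'
  -- filter cardinalities
  have hcle' : q ≤ (Finset.univ.filter (fun d => Rd d ≤ w)).card := by
    rw [mycount D Rd (fun x => x ≤ w) s hs]; exact hcle
  have hclt' : (Finset.univ.filter (fun d => Rd d < w)).card + 1 ≤ q := by
    rw [mycount D Rd (fun x => x < w) s hs]; omega
  -- ncard to filter card
  have e1 : ({d : D | Rd d ≤ w} : Set D).ncard = (Finset.univ.filter (fun d => Rd d ≤ w)).card := by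
    rw [Set.ncard_eq_toFinset_card']; simp
  have e2 : ({d : D | Rd d < w} : Set D).ncard = (Finset.univ.filter (fun d => Rd d < w)).card := by
    rw [Set.ncard_eq_toFinset_card']; simp
  have e3 : ({d : D | R < Rd d} : Set D).ncard = (Finset.univ.filter (fun d => R < Rd d)).card := by
    rw [Set.ncard_eq_toFinset_card']; simp
  have e4 : ({d : D | Rd d = R} : Set D).ncard = (Finset.univ.filter (fun d => Rd d = R)).card := by
    rw [Set.ncard_eq_toFinset_card']; simp
  set nle := (Finset.univ.filter (fun d => Rd d ≤ w)).card with hnle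
  set nlt := (Finset.univ.filter (fun d => Rd d < w)).card with hnlt
  set ngt := (Finset.univ.filter (fun d => R < Rd d)).card with hngt
  set neq := (Finset.univ.filter (fun d => Rd d = R)).card with hneq
  set ngtw := (Finset.univ.filter (fun d => w < Rd d)).card with hngtw
  set neqw := (Finset.univ.filter (fun d => Rd d = w)).card with hneqw
  have hcard : nle + ngtw = l := by
    rw [hnle, hngtw]
    have := Finset.card_filter_add_card_filter_not
      (s := (Finset.univ : Finset D)) (p := fun d => Rd d ≤ w)
    simp only [not_le] at this
    rw [Finset.card_univ, hD] at this
    exact this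
  have hsplit2 : nlt + neqw = nle := by
    rw [hnlt, hneqw, hnle]
    have := Finset.card_filter_add_card_filter_not
      (s := (Finset.univ.filter (fun d => Rd d ≤ w))) (p := fun d => Rd d < w)
    rw [Finset.filter_filter, Finset.filter_filter] at this
    have h1 : (Finset.univ.filter (fun d => Rd d ≤ w ∧ Rd d < w)) =
        (Finset.univ.filter (fun d => Rd d < w)) := by
      apply Finset.filter_congr; intro d _; constructor <;> intro h
      · exact h.2
      · exact ⟨h.le, h⟩
    have h2 : (Finset.univ.filter (fun d => Rd d ≤ w ∧ ¬ Rd d < w)) =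
        (Finset.univ.filter (fun d => Rd d = w)) := by
      apply Finset.filter_congr; intro d _; constructor <;> intro h
      · exact le_antisymm h.1 (not_lt.mp h.2)
      · exact ⟨h.le, by rw [h]; exact lt_irrefl w⟩
    rw [h1, h2] at this
    exact this
  -- real versions
  have hNle : (nle : ℝ) = (q : ℝ) + rr := by rw [hr, e1]; ring
  have hNlt : (nlt : ℝ) = (q : ℝ) - 1 - vv := by rw [hv, e2]; ring
  have hrr0 : 0 ≤ rr := by
    have : (q : ℝ) ≤ (nle : ℝ) := by exact_mod_cast hcle'
    linarith
  have hvv0 : 0 ≤ vv := by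
    have : (nlt : ℝ) + 1 ≤ (q : ℝ) := by exact_mod_cast hclt'
    linarith
  have hNeqw : (neqw : ℝ) = rr + vv + 1 := by
    have : (nlt : ℝ) + (neqw : ℝ) = (nle : ℝ) := by exact_mod_cast hsplit2
    linarith
  have hNgtw : (ngtw : ℝ) = (l : ℝ) - (q : ℝ) - rr := by
    have : (nle : ℝ) + (ngtw : ℝ) = (l : ℝ) := by exact_mod_cast hcard
    linarith
  have hcase' : ((l : ℝ) + 1) * α - ((⌊((l : ℝ) + 1) * α - τ⌋ : ℤ) : ℝ) + rr
      < τ * (rr + vv + 2) := by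
    rw [gt_iff_lt, div_lt_iff₀ (by linarith : (0:ℝ) < rr + vv + 2)] at hcase
    linarith
  have hδ' : δ = ((ngt : ℝ) + τ * (1 + (neq : ℝ))) / ((l : ℝ) + 1) := by
    rw [hδ, e3, e4]
  rcases le_or_gt R w with hRw | hRw
  · have hgoal : δ > α := by
      rcases hRw.lt_or_eq with hRlt | hReq
      · -- R < w : ngt ≥ l - nlt
        have hsub : (Finset.univ.filter (fun d => ¬ Rd d < w)) ⊆
            (Finset.univ.filter (fun d => R < Rd d)) := by
          intro d hd
          rw [Finset.mem_filter] at hd ⊢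
          exact ⟨hd.1, lt_of_lt_of_le hRlt (not_lt.mp hd.2)⟩
        have hc : l ≤ ngt + nlt := by
          have h1 := Finset.card_le_card hsub
          have h2 := Finset.card_filter_add_card_filter_not
            (s := (Finset.univ : Finset D)) (p := fun d => Rd d < w)
          rw [Finset.card_univ, hD] at h2
          omega
        have hcR : (l : ℝ) ≤ (ngt : ℝ) + (nlt : ℝ) := by exact_mod_cast hc
        have hτneq : 0 ≤ τ * (neq : ℝ) := mul_nonneg hτ0 (Nat.cast_nonneg _)
        rw [hδ', gt_iff_lt, lt_div_iff₀ hl1]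
        have hexp : τ * (1 + (neq : ℝ)) = τ + τ * (neq : ℝ) := by ring
        linarith [hNlt, hvv0]
      · -- R = w
        have hgt_eq : ngt = ngtw := by
          rw [hngt, hngtw]
          apply congrArg
          apply Finset.filter_congr
          intro d _
          rw [hReq]
        have heq_eq : neq = neqw := by
          rw [hneq, hneqw]
          apply congrArg
          apply Finset.filter_congr
          intro d _
          rw [hReq]
        rw [hδ', gt_iff_lt, lt_div_iff₀ hl1, hgt_eq, heq_eq, hNgtw, hNeqw]
        have hexp : τ * (1 + (rr + vv + 1)) = τ * (rr + vv + 2) := by ring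
        linarith [hfloor, hcase']
    exact ⟨fun _ => hRw, fun _ => hgoal⟩
  · -- w < R : δ ≤ α
    have hdisj : Disjoint (Finset.univ.filter (fun d => R < Rd d))
        (Finset.univ.filter (fun d => Rd d = R)) := by
      rw [Finset.disjoint_filter]
      intro d _ h1 h2
      exact absurd h2 (ne_of_gt h1)
    have hsubu : (Finset.univ.filter (fun d => R < Rd d)) ∪
        (Finset.univ.filter (fun d => Rd d = R)) ⊆
        (Finset.univ.filter (fun d => w < Rd d)) := by
      intro d hd
      rw [Finset.mem_union, Finset.mem_filter, Finset.mem_filter] at hd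
      rw [Finset.mem_filter]
      rcases hd with ⟨_, h⟩ | ⟨_, h⟩
      · exact ⟨Finset.mem_univ d, lt_trans hRw h⟩
      · exact ⟨Finset.mem_univ d, h ▸ hRw⟩
    have hcsum : ngt + neq ≤ ngtw := by
      have := Finset.card_le_card hsubu
      rwa [Finset.card_union_of_disjoint hdisj] at this
    have hcsumR : (ngt : ℝ) + (neq : ℝ) ≤ (ngtw : ℝ) := by exact_mod_cast hcsum
    have hτneq : τ * (neq : ℝ) ≤ (neq : ℝ) :=
      mul_le_of_le_one_left (Nat.cast_nonneg _) hτ1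
    have hδle : δ ≤ α := by
      rw [hδ', div_le_iff₀ hl1]
      have hexp : τ * (1 + (neq : ℝ)) = τ + τ * (neq : ℝ) := by ring
      linarith [hNgtw, hrr0, hqle]
    exact ⟨fun hgt => absurd hgt (not_lt.mpr hδle), fun hle => absurd hle (not_le.mpr hRw)⟩
end

section
/- Let p ≥ 1 and l ≥ 1 be integers, let D be a finite set with |D| = l, and let q be an integer with 1 ≤ q ≤ l. For each j ∈ {1,…,p} let T_j be a nonempty set, let s_j : T_j → ℝ satisfy s_j(t) > 0 for all t, and for each d ∈ D let r_{d,j} : T_j → ℝ be such that t ↦ |r_{d,j}(t)|/s_j(t) is bounded above on T_j. Define the per-component scores R̃_{d,j} := sup_{t∈T_j} |r_{d,j}(t)|/s_j(t) and the multivariate scores R_d := max_{1≤j≤p} R̃_{d,j}; let k̃_j be the q-th smallest value of (R̃_{d,j})_{d∈D} and k the q-th smallest value of (R_d)_{d∈D}. Then k̃_j ≤ k for every j ∈ {1,…,p}; consequently, for any functions y_j, μ_j : T_j → ℝ, if |y_j(t) − μ_j(t)| ≤ k̃_j · s_j(t) for all j and all t ∈ T_j, then |y_j(t) − μ_j(t)|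 ≤ k · s_j(t) for all j and all t ∈ T_j. -/
/-! Since `R̃_{d,j} ≤ R_d` for every `d`, it suffices that the `q`-th smallest value is monotone
in the family. It is: the `q`-th smallest value is `≤ c` exactly when at least `q` members are
`≤ c`, a condition that only gets easier when the members decrease. -/

open Finset

theorem List.Pairwise.getElem_le_iff_lt_countP {α : Type*} [LinearOrder α] {L : List α}
    (hL : L.Pairwise (· ≤ ·)) {i : ℕ} (hi : i < L.length) (c : α) :
    L[i] ≤ c ↔ i < L.countP (· ≤ c) := by
  have hsplit : L = L.take i ++ L[i] :: L.drop (i + 1) := by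
    rw [← List.drop_eq_getElem_cons hi, List.take_append_drop]
  have hcount := congrArg (List.countP (· ≤ c)) hsplit
  rw [List.countP_append, List.countP_cons] at hcount
  obtain ⟨-, hcons, hcross⟩ := List.pairwise_append.1 (hsplit ▸ hL)
  have hhead := (List.pairwise_cons.1 hcons).1
  have hlen : (L.take i).length = i := by simp only [List.length_take, inf_eq_left]; omega
  rw [hcount]
  constructor
  · intro hc
    have htake : (L.take i).countP (· ≤ c) = i := by
      rw [List.countP_eq_length.2, hlen]
      intro a ha
      simpa using (hcross a ha L[i] List.mem_cons_self).trans hc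
    simp [hc, htake]
  · intro h
    by_contra hc
    have hdrop : (L.drop (i + 1)).countP (· ≤ c) = 0 :=
      List.countP_eq_zero.2 fun b hb => by simpa using (not_le.1 hc).trans_le (hhead b hb)
    have := (L.take i).countP_le_length (p := (· ≤ c))
    simp only [hdrop, hc, decide_false, Bool.false_eq_true, ↓reduceIte, add_zero] at h
    omega

theorem qthSmallest_le_iff {D : Type*} [Fintype D] (x : D → ℝ) {q : ℕ} (hq1 : 1 ≤ q)
    (hq2 : q ≤ Fintype.card D) (c : ℝ) :
    qthSmallest x q ≤ c ↔ q ≤ #{d | x d ≤ c} := by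
  set L := Multiset.sort (Finset.univ.val.map x) (· ≤ ·)
  have hi : q - 1 < L.length := by
    simp only [Multiset.length_sort, Multiset.card_map, card_val, card_univ, L]; omega
  have hcount : L.countP (· ≤ c) = #{d | x d ≤ c} := by
    rw [← Multiset.coe_countP, Multiset.sort_eq, Multiset.countP_map]
    rfl
  rw [qthSmallest, List.getD_eq_getElem _ _ hi,
    (Multiset.pairwise_sort _ _).getElem_le_iff_lt_countP hi, hcount]
  omega

theorem qthSmallest_monotone {D : Type*} [Fintype D] {q : ℕ} (hq1 : 1 ≤ q)
    (hq2 : q ≤ Fintype.card D) : Monotone fun x : D → ℝ => qthSmallest x q := by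
  intro x y hxy
  rw [qthSmallest_le_iff x hq1 hq2]
  calc q ≤ #{d | y d ≤ qthSmallest y q} := (qthSmallest_le_iff y hq1 hq2 _).1 le_rfl
    _ ≤ #{d | x d ≤ qthSmallest y q} :=
      card_le_card (monotone_filter_right _ fun d _ h => (hxy d).trans h)

theorem stmt12_general (p l : ℕ)
    (D : Type) [Fintype D] (hD : Fintype.card D = l)
    (q : ℕ) (hq1 : 1 ≤ q) (hq2 : q ≤ l)
    (τ : Fin p → Type) (T : (j : Fin p) → Set (τ j))
    (s : (j : Fin p) → τ j → ℝ) (hs : ∀ j, ∀ t ∈ T j, 0 < s j t)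
    (Rtil : D → Fin p → ℝ)
    (Rm : D → ℝ) (hRm : ∀ d, Rm d = ⨆ j : Fin p, Rtil d j)
    (ktil : Fin p → ℝ) (hktil : ∀ j, ktil j = qthSmallest (fun d => Rtil d j) q)
    (k : ℝ) (hk : k = qthSmallest Rm q) :
    (∀ j : Fin p, ktil j ≤ k) ∧
      ∀ y μ : (j : Fin p) → τ j → ℝ,
        (∀ j : Fin p, ∀ t ∈ T j, |y j t - μ j t| ≤ ktil j * s j t) →
          ∀ j : Fin p, ∀ t ∈ T j, |y j t - μ j t| ≤ k * s j t := by
  have hktil_le : ∀ j, ktil j ≤ k := fun j => by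
    rw [hktil, hk]
    exact qthSmallest_monotone hq1 (hD ▸ hq2) fun d =>
      hRm d ▸ le_ciSup (Set.finite_range _).bddAbove j
  exact ⟨hktil_le, fun y μ hy j t ht =>
    (hy j t ht).trans (mul_le_mul_of_nonneg_right (hktil_le j) (hs j t ht).le)⟩

theorem stmt12 (p l : ℕ) (hp : 1 ≤ p) (hl : 1 ≤ l)
    (D : Type) [Fintype D] (hD : Fintype.card D = l)
    (q : ℕ) (hq1 : 1 ≤ q) (hq2 : q ≤ l)
    (τ : Fin p → Type) (T : (j : Fin p) → Set (τ j)) (hTne : ∀ j, (T j).Nonempty)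
    (s : (j : Fin p) → τ j → ℝ) (hs : ∀ j, ∀ t ∈ T j, 0 < s j t)
    (r : D → (j : Fin p) → τ j → ℝ)
    (hbdd : ∀ d j, BddAbove ((fun t => |r d j t| / s j t) '' T j))
    (Rtil : D → Fin p → ℝ)
    (hRtil : ∀ d j, Rtil d j = sSup ((fun t => |r d j t| / s j t) '' T j))
    (Rm : D → ℝ) (hRm : ∀ d, Rm d = ⨆ j : Fin p, Rtil d j)
    (ktil : Fin p → ℝ) (hktil : ∀ j, ktil j = qthSmallest (fun d => Rtil d j) q)
    (k : ℝ) (hk : k = qthSmallest Rm q) :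
    (∀ j : Fin p, ktil j ≤ k) ∧
      ∀ y μ : (j : Fin p) → τ j → ℝ,
        (∀ j : Fin p, ∀ t ∈ T j, |y j t - μ j t| ≤ ktil j * s j t) →
          ∀ j : Fin p, ∀ t ∈ T j, |y j t - μ j t| ≤ k * s j t :=
  stmt12_general p l D hD q hq1 hq2 τ T s hs Rtil Rm hRm ktil hktil k hk
end

section
/- Let p ≥ 1 and l ≥ 1 be integers, let D be a finite set with |D| = l, let q be an integer with 1 ≤ q ≤ l, and let λ > 0. For each j ∈ {1,…,p} let T_j be a nonempty set, let s_j : T_j → ℝ satisfy s_j(t) > 0 for all t, and for each d ∈ D let r_{d,j} : T_j → ℝ be such that t ↦ |r_{d,j}(t)|/s_j(t) is bounded above on T_j. Let k^s be the q-th smallest value of the family (sup_{1≤j≤p} sup_{t∈T_j} |r_{d,j}(t)|/s_j(t))_{d∈D} and k^{λs} the q-th smallest value of (sup_{1≤j≤p} sup_{t∈T_j} |r_{d,j}(t)|/(λ·s_j(t)))_{d∈D}. Then k^{λs} = k^s/λ, and for any functions y_j, μ_j : T_j → ℝ the following are equivalent: (i) |y_j(t) − μ_j(t)| ≤ k^{λs}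 · λ·s_j(t) for all j and all t ∈ T_j; (ii) |y_j(t) − μ_j(t)| ≤ k^s · s_j(t) for all j and all t ∈ T_j. -/
theorem qthSmallest_const_mul {D : Type*} [Fintype D] {c : ℝ} (hc : 0 < c) (x : D → ℝ)
    (q : ℕ) : qthSmallest (fun d => c * x d) q = c * qthSmallest x q := by
  have hsort : (Finset.univ.val.map fun d => c * x d).sort (· ≤ ·)
      = ((Finset.univ.val.map x).sort (· ≤ ·)).map (c * ·) := by
    rw [Multiset.map_sort (c * ·) _ (· ≤ ·) (· ≤ ·)
      fun a _ b _ => (mul_le_mul_iff_right₀ hc).symm, Multiset.map_map]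
    rfl
  unfold qthSmallest
  rw [hsort, ← mul_zero c, List.getD_map, mul_zero]

theorem Real.sSup_image_const_mul {α : Type*} {c : ℝ} (hc : 0 ≤ c) (f : α → ℝ) (S : Set α) :
    sSup ((fun t => c * f t) '' S) = c * sSup (f '' S) := by
  rw [← smul_eq_mul, ← Real.sSup_smul_of_nonneg hc, ← Set.image_smul, Set.image_image]
  rfl

theorem stmt14_general (p : ℕ)
    (D : Type) [Fintype D]
    (q : ℕ)
    (lam : ℝ) (hlam : 0 < lam)
    (τ : Fin p → Type) (T : (j : Fin p) → Set (τ j))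
    (s : (j : Fin p) → τ j → ℝ)
    (r : D → (j : Fin p) → τ j → ℝ)
    (ks : ℝ)
    (hks : ks = qthSmallest
      (fun d => ⨆ j : Fin p, sSup ((fun t => |r d j t| / s j t) '' T j)) q)
    (klams : ℝ)
    (hklams : klams = qthSmallest
      (fun d => ⨆ j : Fin p, sSup ((fun t => |r d j t| / (lam * s j t)) '' T j)) q) :
    klams = ks / lam ∧
      ∀ y μ : (j : Fin p) → τ j → ℝ,
        ((∀ j : Fin p, ∀ t ∈ T j, |y j t - μ j t| ≤ klams * (lam * s j t)) ↔
          (∀ j : Fin p, ∀ t ∈ T j, |y j t - μ j t| ≤ ks * s j t)) := by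
  have hscores : (fun d => ⨆ j, sSup ((fun t => |r d j t| / (lam * s j t)) '' T j))
      = fun d => lam⁻¹ * ⨆ j, sSup ((fun t => |r d j t| / s j t) '' T j) := by
    funext d
    simp_rw [Real.mul_iSup_of_nonneg (inv_nonneg.2 hlam.le), ← Real.sSup_image_const_mul
      (inv_nonneg.2 hlam.le), div_mul_eq_div_div_swap, div_eq_inv_mul _ lam]
  have hk : klams = ks / lam := by
    rw [hklams, hks, hscores, qthSmallest_const_mul (inv_pos.2 hlam), inv_mul_eq_div]
  have hbound (j : Fin p) (t : τ j) : klams * (lam * s j t) = ks * s j t := by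
    rw [hk]
    field_simp
  refine ⟨hk, fun y μ => forall_congr' fun j => forall₂_congr fun t _ => ?_⟩
  rw [hbound]

theorem stmt14 (p l : ℕ) (hp : 1 ≤ p) (hl : 1 ≤ l)
    (D : Type) [Fintype D] (hD : Fintype.card D = l)
    (q : ℕ) (hq1 : 1 ≤ q) (hq2 : q ≤ l)
    (lam : ℝ) (hlam : 0 < lam)
    (τ : Fin p → Type) (T : (j : Fin p) → Set (τ j)) (hTne : ∀ j, (T j).Nonempty)
    (s : (j : Fin p) → τ j → ℝ) (hs : ∀ j, ∀ t ∈ T j, 0 < s j t)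
    (r : D → (j : Fin p) → τ j → ℝ)
    (hbdd : ∀ d j, BddAbove ((fun t => |r d j t| / s j t) '' T j))
    (ks : ℝ)
    (hks : ks = qthSmallest
      (fun d => ⨆ j : Fin p, sSup ((fun t => |r d j t| / s j t) '' T j)) q)
    (klams : ℝ)
    (hklams : klams = qthSmallest
      (fun d => ⨆ j : Fin p, sSup ((fun t => |r d j t| / (lam * s j t)) '' T j)) q) :
    klams = ks / lam ∧
      ∀ y μ : (j : Fin p) → τ j → ℝ,
        ((∀ j : Fin p, ∀ t ∈ T j, |y j t - μ j t| ≤ klams * (lam * s j t)) ↔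
          (∀ j : Fin p, ∀ t ∈ T j, |y j t - μ j t| ≤ ks * s j t)) :=
  stmt14_general p D q lam hlam τ T s r ks hks klams hklams
end
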